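/- Let p and q be smooth, strictly positive probability densities on ℝ^d such that all boundary terms vanish (e.g. p(x)∇log q(x) → 0 as |x| → ∞ and all integrals below are finite). Then the Fisher divergence D_F(p||q) = ∫ p(x) |∇log p(x) − ∇log q(x)|² dx equals ∫ p(x)[ |∇log q(x)|² + 2Δ log q(x) ] dx + ∫ p(x)|∇log p(x)|² dx, where the last term does not depend on q. -/

import Mathlib

open MeasureTheory
open scoped BigOperators

/-- `i`-th partial derivative of a function on `ℝ^d`. -/
noncomputable def pderiv {d : ℕ} (f : (Fin d → ℝ) → ℝ) (i : Fin d) (x : Fin d → ℝ) : ℝ :=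
  fderiv ℝ f x (Pi.single i 1)

/-- Euclidean Laplacian on `ℝ^d` as the sum of repeated partial derivatives. -/
noncomputable def plap {d : ℕ} (f : (Fin d → ℝ) → ℝ) (x : Fin d → ℝ) : ℝ :=
  ∑ i, pderiv (fun y => pderiv f i y) i x

lemma contDiff_log_comp {d : ℕ} {f : (Fin d → ℝ) → ℝ} (hf : ContDiff ℝ (⊤ : ℕ∞) f)
    (hfpos : ∀ x, 0 < f x) : ContDiff ℝ (⊤ : ℕ∞) (fun y => Real.log (f y)) := by
  rw [contDiff_iff_contDiffAt] at *
  intro x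
  exact (Real.contDiffAt_log.mpr (hfpos x).ne').comp x (hf x)

lemma contDiff_pderiv {d : ℕ} {f : (Fin d → ℝ) → ℝ} (hf : ContDiff ℝ (⊤ : ℕ∞) f) (i : Fin d) :
    ContDiff ℝ (⊤ : ℕ∞) (fun y => pderiv f i y) :=
  (hf.fderiv_right (le_refl _)).clm_apply contDiff_const

lemma pderiv_log {d : ℕ} {f : (Fin d → ℝ) → ℝ} (hf : ContDiff ℝ (⊤ : ℕ∞) f)
    (hfpos : ∀ x, 0 < f x) (i : Fin d) (x : Fin d → ℝ) :
    pderiv (fun y => Real.log (f y)) i x = pderiv f i x / f x := by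
  have hdf : HasFDerivAt f (fderiv ℝ f x) x :=
    (hf.differentiable (by simp) x).hasFDerivAt
  have h := (Real.hasDerivAt_log (hfpos x).ne').comp_hasFDerivAt x hdf
  have : (fun y => Real.log (f y)) = Real.log ∘ f := rfl
  rw [pderiv, this, h.fderiv]
  simp [pderiv, div_eq_inv_mul]

lemma pderiv_mul {d : ℕ} {u v : (Fin d → ℝ) → ℝ} {x : Fin d → ℝ} {i : Fin d}
    (hu : DifferentiableAt ℝ u x) (hv : DifferentiableAt ℝ v x) :
    pderiv (fun y => u y * v y) i x = pderiv u i x * v x + u x * pderiv v i x := by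
  unfold pderiv
  rw [fderiv_fun_mul hu hv]
  simp only [ContinuousLinearMap.add_apply, ContinuousLinearMap.smul_apply, smul_eq_mul]
  ring

/-- Score-matching (Hyvärinen) integration-by-parts identity: under smoothness,
positivity, integrability and vanishing of boundary terms (encoded as the
vanishing of the integrated divergence of `p ∇log q`), the Fisher divergence
`D_F(p‖q) = ∫ p |∇log p − ∇log q|²` equals
`∫ p (|∇log q|² + 2 Δ log q) + ∫ p |∇log p|²`. -/
theorem score_matching_identity (d : ℕ)
    (p q : (Fin d → ℝ) → ℝ)
    (hp : ContDiff ℝ (⊤ : ℕ∞) p) (hq : ContDiff ℝ (⊤ : ℕ∞) q)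
    (hppos : ∀ x, 0 < p x) (hqpos : ∀ x, 0 < q x)
    (hpdens : ∫ x : Fin d → ℝ, p x = 1) (hqdens : ∫ x : Fin d → ℝ, q x = 1)
    (hint1 : Integrable (fun x : Fin d → ℝ =>
      p x * ∑ i, (pderiv (fun y => Real.log (p y)) i x - pderiv (fun y => Real.log (q y)) i x)^2))
    (hint2 : Integrable (fun x : Fin d → ℝ =>
      p x * ((∑ i, (pderiv (fun y => Real.log (q y)) i x)^2)
        + 2 * plap (fun y => Real.log (q y)) x)))
    (hint3 : Integrable (fun x : Fin d → ℝ =>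
      p x * ∑ i, (pderiv (fun y => Real.log (p y)) i x)^2))
    (hint4 : Integrable (fun x : Fin d → ℝ =>
      p x * ∑ i, pderiv (fun y => Real.log (p y)) i x * pderiv (fun y => Real.log (q y)) i x))
    (hboundary : ∫ x : Fin d → ℝ,
      (∑ i, pderiv (fun y => p y * pderiv (fun w => Real.log (q w)) i y) i x) = 0) :
    (∫ x : Fin d → ℝ,
        p x * ∑ i, (pderiv (fun y => Real.log (p y)) i x
            - pderiv (fun y => Real.log (q y)) i x)^2)
      = (∫ x : Fin d → ℝ,
          p x * ((∑ i, (pderiv (fun y => Real.log (q y)) i x)^2)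
            + 2 * plap (fun y => Real.log (q y)) x))
        + ∫ x : Fin d → ℝ, p x * ∑ i, (pderiv (fun y => Real.log (p y)) i x)^2 := by
  have hL : ContDiff ℝ (⊤ : ℕ∞) (fun y => Real.log (q y)) := contDiff_log_comp hq hqpos
  -- divergence term
  set B : (Fin d → ℝ) → ℝ := fun x =>
    ∑ i, pderiv (fun y => p y * pderiv (fun w => Real.log (q w)) i y) i x with hBdef
  -- key pointwise computation: B x = p x * Σ aᵢ bᵢ + p x * Δ log q
  have key : ∀ x, B x
      = p x * (∑ i, pderiv (fun y => Real.log (p y)) i x * pderiv (fun y => Real.log (q y)) i x)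
        + p x * plap (fun y => Real.log (q y)) x := by
    intro x
    have hterm : ∀ i : Fin d,
        pderiv (fun y => p y * pderiv (fun w => Real.log (q w)) i y) i x
        = p x * (pderiv (fun y => Real.log (p y)) i x * pderiv (fun y => Real.log (q y)) i x)
          + p x * pderiv (fun y => pderiv (fun w => Real.log (q w)) i y) i x := by
      intro i
      rw [pderiv_mul (hp.differentiable (by simp) x)
        ((contDiff_pderiv hL i).differentiable (by simp) x)]
      have h1 : pderiv (fun y => Real.log (p y)) i x = pderiv p i x / p x :=
        pderiv_log hp hppos i x
      rw [h1]
      field_simp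
      exact (mul_div_cancel_left₀ _ (hppos x).ne').symm
    simp only [hBdef, hterm, plap, Finset.sum_add_distrib, Finset.mul_sum]
  -- pointwise expansion of the square
  have hpt : ∀ x,
      p x * ∑ i, (pderiv (fun y => Real.log (p y)) i x
          - pderiv (fun y => Real.log (q y)) i x)^2
      = p x * ((∑ i, (pderiv (fun y => Real.log (q y)) i x)^2)
          + 2 * plap (fun y => Real.log (q y)) x)
        + p x * (∑ i, (pderiv (fun y => Real.log (p y)) i x)^2)
        - 2 * B x := by
    intro x
    rw [key x]
    have : ∀ i : Fin d,
        (pderiv (fun y => Real.log (p y)) i x - pderiv (fun y => Real.log (q y)) i x)^2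
        = (pderiv (fun y => Real.log (p y)) i x)^2
          + (pderiv (fun y => Real.log (q y)) i x)^2
          - 2 * (pderiv (fun y => Real.log (p y)) i x * pderiv (fun y => Real.log (q y)) i x) := by
      intro i; ring
    simp only [this, Finset.sum_sub_distrib, Finset.sum_add_distrib, ← Finset.mul_sum]
    ring
  -- integrability of B
  have hBint : Integrable B := by
    have hBeq : B = fun x =>
        (p x * ((∑ i, (pderiv (fun y => Real.log (q y)) i x)^2)
            + 2 * plap (fun y => Real.log (q y)) x)
          + p x * (∑ i, (pderiv (fun y => Real.log (p y)) i x)^2)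
          - p x * ∑ i, (pderiv (fun y => Real.log (p y)) i x
              - pderiv (fun y => Real.log (q y)) i x)^2) / 2 := by
      funext x
      have := hpt x
      linarith
    rw [hBeq]
    exact ((hint2.add hint3).sub hint1).div_const 2
  -- now compute the integral
  calc (∫ x : Fin d → ℝ,
        p x * ∑ i, (pderiv (fun y => Real.log (p y)) i x
            - pderiv (fun y => Real.log (q y)) i x)^2)
      = ∫ x : Fin d → ℝ,
          (p x * ((∑ i, (pderiv (fun y => Real.log (q y)) i x)^2)
            + 2 * plap (fun y => Real.log (q y)) x)
          + p x * (∑ i, (pderiv (fun y => Real.log (p y)) i x)^2)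
          - 2 * B x) := by
        exact integral_congr_ae (Filter.Eventually.of_forall hpt)
    _ = (∫ x : Fin d → ℝ,
          p x * ((∑ i, (pderiv (fun y => Real.log (q y)) i x)^2)
            + 2 * plap (fun y => Real.log (q y)) x))
        + (∫ x : Fin d → ℝ, p x * ∑ i, (pderiv (fun y => Real.log (p y)) i x)^2)
        - 2 * ∫ x : Fin d → ℝ, B x := by
        have h23 : Integrable (fun x : Fin d → ℝ =>
            p x * ((∑ i, (pderiv (fun y => Real.log (q y)) i x)^2)
              + 2 * plap (fun y => Real.log (q y)) x)
            + p x * (∑ i, (pderiv (fun y => Real.log (p y)) i x)^2)) := hint2.add hint3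
        have h2B : Integrable (fun x : Fin d → ℝ => 2 * B x) := hBint.const_mul 2
        rw [integral_sub h23 h2B, integral_add hint2 hint3, MeasureTheory.integral_const_mul]
    _ = _ := by rw [hBdef] at hboundary ⊢; rw [hboundary]; ring
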